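/- Let m ≥ 1 and 0 ≤ k ≤ m, let φ be a Schwartz function on ℝ whose Fourier transform φ̂ is supported in [−1/100, 1/100], and let ϕ ∈ C^∞(ℝ) be supported in [−1/10, 1/10] and equal to 1 on [−1/20, 1/20]. Fix an integer N ≥ 1, signs e_j ∈ {−1, +1} for −N ≤ j ≤ N, and complex numbers d_l for −mN ≤ l ≤ mN. Define f(x) = N^{−1} φ(x/N) Σ_{j=−N}^N e_j e^{2πi j x/N}, g(x) = N^{−1} φ(x/N) Σ_{j=−N}^N e^{2πi j x/N}, and σ(ξ₁,…,ξ_m) = Σ_{j₁=−N}^N ⋯ Σ_{j_m=−N}^N d_{j₁+⋯+j_m} e_{j₁}⋯e_{j_k} ∏_{i=1}^m ϕ(Nξ_i − j_i). Then for every x ∈ ℝ: T_σ(f, …, f, g, …, g)(x), with f in the first k slots and g in the remaining m − k slots, equals N^{−m} φ(x/N)^m Σ_{j₁=−N}^N ⋯ Σ_{j_m=−N}^N d_{j₁+⋯+j_m} e^{2πi (j₁+⋯+j_m) x/N}; in particular this value is independent of k. -/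

import Mathlib

/-!
Each slot function is a sum of modulated dilates of `φ`, so its Fourier transform is
`∑ⱼ cⱼ φ̂(Nξ - j)`: bumps of width `1/(50N)` centred at the points `j/N`. The factor
`ϕ(Nξ - j)` of `σ` equals `1` on the `j`-th bump and vanishes on all the others, so
`σ(ξ) ∏ᵢ f̂ᵢ(ξᵢ)` collapses to `∑_J d_{ΣJ} e_J² ∏ᵢ φ̂(Nξᵢ - Jᵢ)` with `e_J² = 1`. The integral then
factors into one-dimensional Fourier inversions, each contributing `N⁻¹ e^{2πi Jᵢ x/N} φ(x/N)`.
-/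

open MeasureTheory

noncomputable section

/-- The one-dimensional Fourier transform `f̂(ξ) = ∫ f(y) e^{-2πi yξ} dy`. -/
def ft1 (f : ℝ → ℂ) (ξ : ℝ) : ℂ :=
  ∫ y : ℝ, f y * Complex.exp (-(2 * Real.pi * Complex.I) * ((y * ξ : ℝ) : ℂ))

/-- The `m`-linear multiplier operator on `ℝ`:
`T_σ(f₁,…,f_m)(x) = ∫ σ(ξ₁,…,ξ_m) f̂₁(ξ₁)⋯f̂_m(ξ_m) e^{2πi x(ξ₁+⋯+ξ_m)} dξ`. -/
def TmulR {m : ℕ} (σ : (Fin m → ℝ) → ℂ) (f : Fin m → (ℝ → ℂ)) (x : ℝ) : ℂ :=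
  ∫ ξ : Fin m → ℝ, σ ξ * (∏ i, ft1 (f i) (ξ i)) *
    Complex.exp ((2 * Real.pi * Complex.I) * (((∑ i, ξ i) * x : ℝ) : ℂ))

open scoped FourierTransform

local notation "𝐞[" r "]" => Complex.exp (2 * Real.pi * Complex.I * ((r : ℝ) : ℂ))

lemma cexp_sum_eq_prod {ι : Type*} (s : Finset ι) (f : ι → ℝ) :
    𝐞[∑ i ∈ s, f i] = ∏ i ∈ s, 𝐞[f i] := by
  rw [← Complex.exp_sum, ← Finset.mul_sum]
  push_cast
  rfl

lemma MeasureTheory.Integrable.mul_cexp_mul_ofReal {f : ℝ → ℂ} (hf : Integrable f) {z : ℂ}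
    (hz : z.re = 0) {g : ℝ → ℝ} (hg : Continuous g) :
    Integrable fun y => f y * Complex.exp (z * g y) :=
  hf.mul_bdd (c := 1) (by fun_prop) <| .of_forall fun y => by
    simp [Complex.norm_exp, Complex.mul_re, hz]

lemma ft1_eq_fourier (f : ℝ → ℂ) : ft1 f = 𝓕 f := by
  ext ξ
  rw [Real.fourier_real_eq_integral_exp_smul, ft1]
  congr 1 with y
  rw [smul_eq_mul]
  push_cast
  ring_nf

lemma integrable_ft1_schwartz (φ : SchwartzMap ℝ ℂ) : Integrable (ft1 φ) := by
  rw [ft1_eq_fourier, ← SchwartzMap.fourier_coe]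
  exact (𝓕 φ).integrable

lemma integral_ft1_mul_cexp_schwartz (φ : SchwartzMap ℝ ℂ) (w : ℝ) :
    ∫ v, ft1 φ v * 𝐞[v * w] = φ w := by
  have hinv := φ.continuous.fourierInv_fourier_eq φ.integrable
    (ft1_eq_fourier φ ▸ integrable_ft1_schwartz φ)
  conv_rhs => rw [← hinv, Real.fourierInv_eq_fourier_neg, Real.fourier_real_eq_integral_exp_smul,
    ← ft1_eq_fourier]
  congr 1 with v
  rw [smul_eq_mul]
  push_cast
  ring_nf

lemma ft1_const_mul (c : ℂ) (f : ℝ → ℂ) (ξ : ℝ) : ft1 (fun y => c * f y) ξ = c * ft1 f ξ := by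
  simp only [ft1, mul_assoc, integral_const_mul]

lemma ft1_finset_sum {ι : Type*} (S : Finset ι) {g : ι → ℝ → ℂ}
    (hg : ∀ j ∈ S, Integrable (g j)) (ξ : ℝ) :
    ft1 (fun y => ∑ j ∈ S, g j y) ξ = ∑ j ∈ S, ft1 (g j) ξ := by
  simp only [ft1, Finset.sum_mul]
  exact integral_finsetSum S fun j hj => (hg j hj).mul_cexp_mul_ofReal (by simp) (by fun_prop)

lemma ft1_comp_div_mul_cexp (f : ℝ → ℂ) {a : ℝ} (ha : a ≠ 0) (b ξ : ℝ) :
    ft1 (fun y => f (y / a) * 𝐞[b * y / a]) ξ = |a| * ft1 f (a * ξ - b) := by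
  have hchange : ∀ y : ℝ, f (y / a) * 𝐞[b * y / a] *
      Complex.exp (-(2 * Real.pi * Complex.I) * ((y * ξ : ℝ) : ℂ)) =
      f (y / a) * Complex.exp (-(2 * Real.pi * Complex.I) * ((y / a * (a * ξ - b) : ℝ) : ℂ)) := by
    intro y
    have ha' : (a : ℂ) ≠ 0 := by exact_mod_cast ha
    rw [mul_assoc, ← Complex.exp_add]
    congr 2
    push_cast
    field_simp
    ring
  simp only [ft1, hchange]
  rw [Measure.integral_comp_div (fun u => f u *
    Complex.exp (-(2 * Real.pi * Complex.I) * ((u * (a * ξ - b) : ℝ) : ℂ))), Complex.real_smul]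

def wavePacket (φ : ℝ → ℂ) (a : ℝ) (S : Finset ℤ) (c : ℤ → ℂ) (y : ℝ) : ℂ :=
  (a : ℂ)⁻¹ * φ (y / a) * ∑ j ∈ S, c j * 𝐞[j * y / a]

lemma ft1_wavePacket {φ : ℝ → ℂ} (hφ : Integrable φ) {a : ℝ} (ha : 0 < a) (S : Finset ℤ)
    (c : ℤ → ℂ) (ξ : ℝ) :
    ft1 (wavePacket φ a S c) ξ = ∑ j ∈ S, c j * ft1 φ (a * ξ - j) := by
  have hsum : wavePacket φ a S c =
      fun y => ∑ j ∈ S, ((a : ℂ)⁻¹ * c j) * (φ (y / a) * 𝐞[j * y / a]) := by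
    ext y
    simp only [wavePacket, Finset.mul_sum]
    exact Finset.sum_congr rfl fun j _ => by ring
  have hint : ∀ j ∈ S, Integrable fun y => ((a : ℂ)⁻¹ * c j) * (φ (y / a) * 𝐞[j * y / a]) :=
    fun j _ => ((hφ.comp_div ha.ne').mul_cexp_mul_ofReal (by simp) (by fun_prop)).const_mul _
  rw [hsum, ft1_finset_sum S hint]
  refine Finset.sum_congr rfl fun j _ => ?_
  have ha' : (a : ℂ) ≠ 0 := by exact_mod_cast ha.ne'
  rw [ft1_const_mul, ft1_comp_div_mul_cexp φ ha.ne', abs_of_pos ha]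
  field_simp

section Support

variable {ψ : ℝ → ℝ} {F : ℝ → ℂ} {r s : ℝ}

lemma ofReal_mul_shift_eq_zero (hψ : ∀ x, ψ x ≠ 0 → |x| ≤ r) (hF : ∀ ξ, F ξ ≠ 0 → |ξ| ≤ s)
    (hrs : r + s < 1) (u : ℝ) {i j : ℤ} (hij : i ≠ j) :
    (ψ (u - i) : ℂ) * F (u - j) = 0 := by
  by_contra hne
  obtain ⟨hψne, hFne⟩ := mul_ne_zero_iff.mp hne
  have hi : |u - i| ≤ r := hψ _ (by exact_mod_cast hψne)
  have hj : |u - j| ≤ s := hF _ hFne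
  have hsep : (1 : ℝ) ≤ |(i : ℝ) - j| := by
    exact_mod_cast Int.one_le_abs (sub_ne_zero.mpr hij)
  have htri : |(i : ℝ) - j| ≤ |u - i| + |u - j| := by
    simpa only [abs_sub_comm (i : ℝ) u] using abs_sub_le (i : ℝ) u j
  linarith

lemma ofReal_mul_eq_self (hψ : ∀ x, |x| ≤ s → ψ x = 1) (hF : ∀ ξ, F ξ ≠ 0 → |ξ| ≤ s) (u : ℝ) :
    (ψ u : ℂ) * F u = F u := by
  by_cases h0 : F u = 0
  · rw [h0, mul_zero]
  · rw [hψ u (hF u h0), Complex.ofReal_one, one_mul]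

lemma ofReal_mul_sum_shift (hψ_supp : ∀ x, ψ x ≠ 0 → |x| ≤ r)
    (hψ_one : ∀ x, |x| ≤ s → ψ x = 1) (hF : ∀ ξ, F ξ ≠ 0 → |ξ| ≤ s) (hrs : r + s < 1)
    (u : ℝ) {S : Finset ℤ} {i : ℤ} (hi : i ∈ S) (c : ℤ → ℂ) :
    (ψ (u - i) : ℂ) * ∑ j ∈ S, c j * F (u - j) = c i * F (u - i) := by
  rw [Finset.mul_sum, Finset.sum_eq_single_of_mem i hi fun j _ hji => by
    rw [mul_left_comm, ofReal_mul_shift_eq_zero hψ_supp hF hrs u hji.symm, mul_zero]]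
  rw [mul_left_comm, ofReal_mul_eq_self hψ_one hF]

end Support

def bumpMultiplier {m : ℕ} (ψ : ℝ → ℝ) (a : ℝ) (S : Finset ℤ) (D : (Fin m → ℤ) → ℂ)
    (ξ : Fin m → ℝ) : ℂ :=
  ∑ J ∈ Fintype.piFinset (fun _ : Fin m => S), D J * ∏ i, ((ψ (a * ξ i - J i) : ℝ) : ℂ)

section Multiplier

variable {m : ℕ} {φ : SchwartzMap ℝ ℂ} {ψ : ℝ → ℝ} {r s a : ℝ}

lemma bumpMultiplier_mul_prod_ft1_wavePacket (hφ : ∀ ξ, ft1 φ ξ ≠ 0 → |ξ| ≤ s)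
    (hψ_supp : ∀ x, ψ x ≠ 0 → |x| ≤ r) (hψ_one : ∀ x, |x| ≤ s → ψ x = 1) (hrs : r + s < 1)
    (ha : 0 < a) (S : Finset ℤ) (D : (Fin m → ℤ) → ℂ) (κ : Fin m → ℤ → ℂ) (x : ℝ)
    (ξ : Fin m → ℝ) :
    bumpMultiplier ψ a S D ξ * (∏ i, ft1 (wavePacket φ a S (κ i)) (ξ i)) * 𝐞[(∑ i, ξ i) * x] =
      ∑ J ∈ Fintype.piFinset (fun _ : Fin m => S),
        D J * ∏ i, κ i (J i) * (ft1 φ (a * ξ i - J i) * 𝐞[ξ i * x]) := by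
  simp only [ft1_wavePacket φ.integrable ha, Finset.sum_mul, cexp_sum_eq_prod, bumpMultiplier]
  refine Finset.sum_congr rfl fun J hJ => ?_
  rw [mul_assoc, mul_assoc, ← Finset.prod_mul_distrib, ← Finset.prod_mul_distrib]
  congr 1
  refine Finset.prod_congr rfl fun i _ => ?_
  rw [← mul_assoc, ofReal_mul_sum_shift hψ_supp hψ_one hφ hrs _ (Fintype.mem_piFinset.mp hJ i),
    mul_assoc]

lemma integrable_ft1_comp_mul_sub_mul_cexp (φ : SchwartzMap ℝ ℂ) (ha : 0 < a) (b x : ℝ) :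
    Integrable fun t => ft1 φ (a * t - b) * 𝐞[t * x] :=
  (((integrable_ft1_schwartz φ).comp_sub_right b).comp_mul_left' ha.ne').mul_cexp_mul_ofReal
    (by simp) (by fun_prop)

lemma integral_ft1_comp_mul_sub_mul_cexp (φ : SchwartzMap ℝ ℂ) (ha : 0 < a) (b x : ℝ) :
    ∫ t, ft1 φ (a * t - b) * 𝐞[t * x] = (a : ℂ)⁻¹ * 𝐞[b * x / a] * φ (x / a) := by
  have ha' : (a : ℂ) ≠ 0 := by exact_mod_cast ha.ne'
  have hshift : ∀ t : ℝ, ft1 φ (a * t - b) * 𝐞[t * x] =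
      ft1 φ (a * t - b) * 𝐞[(a * t - b) * (x / a)] * 𝐞[b * x / a] := by
    intro t
    conv_rhs => rw [mul_assoc, ← Complex.exp_add]
    congr 2
    push_cast
    field_simp
    ring
  simp only [hshift]
  rw [Measure.integral_comp_mul_left (fun y => ft1 φ (y - b) * 𝐞[(y - b) * (x / a)] * 𝐞[b * x / a]),
    integral_sub_right_eq_self (fun y => ft1 φ y * 𝐞[y * (x / a)] * 𝐞[b * x / a]),
    integral_mul_const, integral_ft1_mul_cexp_schwartz, abs_of_pos (inv_pos.mpr ha),
    Complex.real_smul]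
  push_cast
  ring

theorem TmulR_bumpMultiplier_wavePacket (hφ : ∀ ξ, ft1 φ ξ ≠ 0 → |ξ| ≤ s)
    (hψ_supp : ∀ x, ψ x ≠ 0 → |x| ≤ r) (hψ_one : ∀ x, |x| ≤ s → ψ x = 1) (hrs : r + s < 1)
    (ha : 0 < a) (S : Finset ℤ) (D : (Fin m → ℤ) → ℂ) (κ : Fin m → ℤ → ℂ) (x : ℝ) :
    TmulR (bumpMultiplier ψ a S D) (fun i => wavePacket φ a S (κ i)) x =
      ((a ^ m : ℝ) : ℂ)⁻¹ * φ (x / a) ^ m *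
        ∑ J ∈ Fintype.piFinset (fun _ : Fin m => S),
          D J * (∏ i, κ i (J i)) * 𝐞[((∑ i, J i : ℤ) : ℝ) * x / a] := by
  have hfactor : ∀ J : Fin m → ℤ, ∫ ξ : Fin m → ℝ,
      D J * ∏ i, κ i (J i) * (ft1 φ (a * ξ i - J i) * 𝐞[ξ i * x]) =
      D J * ∏ i, κ i (J i) * ((a : ℂ)⁻¹ * 𝐞[J i * x / a] * φ (x / a)) := fun J => by
    rw [integral_const_mul, integral_fintype_prod_volume_eq_prod
      (fun i t => κ i (J i) * (ft1 φ (a * t - J i) * 𝐞[t * x]))]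
    simp only [integral_const_mul, integral_ft1_comp_mul_sub_mul_cexp φ ha]
  have hint : ∀ J : Fin m → ℤ, Integrable fun ξ : Fin m → ℝ =>
      D J * ∏ i, κ i (J i) * (ft1 φ (a * ξ i - J i) * 𝐞[ξ i * x]) := fun J =>
    (Integrable.fintype_prod fun i =>
      (integrable_ft1_comp_mul_sub_mul_cexp φ ha _ x).const_mul (κ i (J i))).const_mul (D J)
  simp only [TmulR, bumpMultiplier_mul_prod_ft1_wavePacket hφ hψ_supp hψ_one hrs ha]
  rw [integral_finsetSum _ fun J _ => hint J, Finset.mul_sum]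
  refine Finset.sum_congr rfl fun J _ => ?_
  rw [hfactor, Finset.prod_mul_distrib, Finset.prod_mul_distrib, Finset.prod_mul_distrib,
    ← cexp_sum_eq_prod, Finset.prod_const, Finset.prod_const, Finset.card_univ, Fintype.card_fin]
  push_cast
  rw [Finset.sum_mul, Finset.sum_div, inv_pow]
  ring

end Multiplier

theorem Tsigma_eval_PL_general (m : ℕ) (k : ℕ)
    (φ : SchwartzMap ℝ ℂ)
    (hφ_supp : ∀ ξ : ℝ, ft1 (⇑φ) ξ ≠ 0 → |ξ| ≤ 1 / 100)
    (ϕ : ℝ → ℝ)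
    (hϕ_supp : ∀ x : ℝ, ϕ x ≠ 0 → |x| ≤ 1 / 10)
    (hϕ_one : ∀ x : ℝ, |x| ≤ 1 / 20 → ϕ x = 1)
    (N : ℕ) (hN : 1 ≤ N)
    (e : ℤ → ℝ) (he : ∀ j, e j = 1 ∨ e j = -1) (d : ℤ → ℂ) :
    ∀ x : ℝ,
      TmulR
        (fun ξ : Fin m → ℝ =>
          ∑ j ∈ Fintype.piFinset (fun _ : Fin m => Finset.Icc (-(N : ℤ)) (N : ℤ)),
            d (∑ i, j i) * (∏ i : Fin m, if (i : ℕ) < k then ((e (j i) : ℝ) : ℂ) else 1) *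
              ∏ i : Fin m, ((ϕ ((N : ℝ) * ξ i - (j i : ℝ)) : ℝ) : ℂ))
        (fun i =>
          if (i : ℕ) < k then
            fun y : ℝ => ((N : ℝ) : ℂ)⁻¹ * φ (y / N) * ∑ j ∈ Finset.Icc (-(N : ℤ)) (N : ℤ),
              ((e j : ℝ) : ℂ) *
                Complex.exp ((2 * Real.pi * Complex.I) * (((j : ℝ) * y / N : ℝ) : ℂ))
          else
            fun y : ℝ => ((N : ℝ) : ℂ)⁻¹ * φ (y / N) * ∑ j ∈ Finset.Icc (-(N : ℤ)) (N : ℤ),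
              Complex.exp ((2 * Real.pi * Complex.I) * (((j : ℝ) * y / N : ℝ) : ℂ)))
        x =
      (((N : ℝ) ^ m : ℝ) : ℂ)⁻¹ * φ (x / N) ^ m *
        ∑ j ∈ Fintype.piFinset (fun _ : Fin m => Finset.Icc (-(N : ℤ)) (N : ℤ)),
          d (∑ i, j i) *
            Complex.exp ((2 * Real.pi * Complex.I) *
              ((((∑ i, j i : ℤ) : ℝ) * x / N : ℝ) : ℂ)) := by
  intro x
  set κ : Fin m → ℤ → ℂ := fun i j => if (i : ℕ) < k then ((e j : ℝ) : ℂ) else 1 with hκ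
  have hκ_sq : ∀ i j, κ i j * κ i j = 1 := fun i j => by
    by_cases hi : (i : ℕ) < k
    · rcases he j with hj | hj <;> simp [hκ, hi, hj]
    · simp [hκ, hi]
  convert TmulR_bumpMultiplier_wavePacket (ψ := ϕ) (a := N) hφ_supp hϕ_supp
    (fun x hx => hϕ_one x (hx.trans (by norm_num))) (by norm_num) (by positivity)
    (Finset.Icc (-(N : ℤ)) N) (fun J : Fin m → ℤ => d (∑ i, J i) * ∏ i, κ i (J i)) κ x using 2
  · rfl
  · ext i y
    by_cases hi : (i : ℕ) < k <;> simp [wavePacket, hκ, hi]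
  · refine Finset.sum_congr rfl fun J _ => ?_
    rw [mul_assoc (d _), ← Finset.prod_mul_distrib, Finset.prod_congr rfl fun i _ => hκ_sq i (J i),
      Finset.prod_const_one, mul_one]

/-- **Computation for Theorem `PL`.** With
`f(x) = N⁻¹ φ(x/N) Σ_{j=-N}^N e_j e^{2πijx/N}`, `g(x) = N⁻¹ φ(x/N) Σ_{j=-N}^N e^{2πijx/N}`
and `σ(ξ) = Σ_{j₁,…,j_m} d_{j₁+⋯+j_m} e_{j₁}⋯e_{j_k} ∏_i ϕ(Nξ_i - j_i)`, placing `f` in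
the first `k` slots and `g` in the remaining `m - k` slots, one has
`T_σ(f,…,f,g,…,g)(x) = N^{-m} φ(x/N)^m Σ_{j₁,…,j_m} d_{j₁+⋯+j_m} e^{2πi(j₁+⋯+j_m)x/N}`;
in particular the value is independent of `k`. -/
theorem Tsigma_eval_PL (m : ℕ) (hm : 1 ≤ m) (k : ℕ) (hk : k ≤ m)
    (φ : SchwartzMap ℝ ℂ)
    (hφ_supp : ∀ ξ : ℝ, ft1 (⇑φ) ξ ≠ 0 → |ξ| ≤ 1 / 100)
    (ϕ : ℝ → ℝ) (hϕ_smooth : ContDiff ℝ (⊤ : ℕ∞) ϕ)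
    (hϕ_supp : ∀ x : ℝ, ϕ x ≠ 0 → |x| ≤ 1 / 10)
    (hϕ_one : ∀ x : ℝ, |x| ≤ 1 / 20 → ϕ x = 1)
    (N : ℕ) (hN : 1 ≤ N)
    (e : ℤ → ℝ) (he : ∀ j, e j = 1 ∨ e j = -1) (d : ℤ → ℂ) :
    ∀ x : ℝ,
      TmulR
        (fun ξ : Fin m → ℝ =>
          ∑ j ∈ Fintype.piFinset (fun _ : Fin m => Finset.Icc (-(N : ℤ)) (N : ℤ)),
            d (∑ i, j i) * (∏ i : Fin m, if (i : ℕ) < k then ((e (j i) : ℝ) : ℂ) else 1) *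
              ∏ i : Fin m, ((ϕ ((N : ℝ) * ξ i - (j i : ℝ)) : ℝ) : ℂ))
        (fun i =>
          if (i : ℕ) < k then
            fun y : ℝ => ((N : ℝ) : ℂ)⁻¹ * φ (y / N) * ∑ j ∈ Finset.Icc (-(N : ℤ)) (N : ℤ),
              ((e j : ℝ) : ℂ) *
                Complex.exp ((2 * Real.pi * Complex.I) * (((j : ℝ) * y / N : ℝ) : ℂ))
          else
            fun y : ℝ => ((N : ℝ) : ℂ)⁻¹ * φ (y / N) * ∑ j ∈ Finset.Icc (-(N : ℤ)) (N : ℤ),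
              Complex.exp ((2 * Real.pi * Complex.I) * (((j : ℝ) * y / N : ℝ) : ℂ)))
        x =
      (((N : ℝ) ^ m : ℝ) : ℂ)⁻¹ * φ (x / N) ^ m *
        ∑ j ∈ Fintype.piFinset (fun _ : Fin m => Finset.Icc (-(N : ℤ)) (N : ℤ)),
          d (∑ i, j i) *
            Complex.exp ((2 * Real.pi * Complex.I) *
              ((((∑ i, j i : ℤ) : ℝ) * x / N : ℝ) : ℂ)) :=
  Tsigma_eval_PL_general m k φ hφ_supp ϕ hϕ_supp hϕ_one N hN e he d

end
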